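/- Fix a real number R > 0 and define p_Φ(φ) = (1/(2π))·e^{−R²} + (R/√(4π))·cos(φ)·e^{−R² sin²(φ)}·erfc(−R cos(φ)) for φ ∈ [−π, π). Then ∫_{−π}^{π} cos(φ)·p_Φ(φ) dφ ≥ 1 − e^{−π² R²/4} − 1/(2R²) − (√π/4)·R·e^{−R²}. -/

import Mathlib

open Real MeasureTheory intervalIntegral

/-- The complementary error function `erfc z = (2/√π) ∫_z^∞ e^{-t²} dt`. -/
noncomputable def erfc (z : ℝ) : ℝ := (2 / Real.sqrt π) * ∫ t in Set.Ioi z, Real.exp (-t ^ 2)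

lemma integrable_gauss1 : Integrable (fun t : ℝ => Real.exp (-t ^ 2)) := by
  have := integrable_exp_neg_mul_sq (b := (1:ℝ)) one_pos
  simpa using this

lemma integral_gauss1 : ∫ t : ℝ, Real.exp (-t ^ 2) = Real.sqrt π := by
  have := integral_gaussian 1
  simpa using this

lemma erfc_antitone : Antitone (fun z : ℝ => ∫ t in Set.Ioi z, Real.exp (-t ^ 2)) := by
  intro a b hab
  exact setIntegral_mono_set integrable_gauss1.integrableOn
    (Filter.Eventually.of_forall fun t => (Real.exp_pos _).le)
    (HasSubset.Subset.eventuallyLE (Set.Ioi_subset_Ioi hab))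

lemma measurable_erfc : Measurable erfc :=
  (erfc_antitone.measurable).const_mul _

lemma erfc_nonneg (z : ℝ) : 0 ≤ erfc z :=
  mul_nonneg (by positivity)
    (setIntegral_nonneg measurableSet_Ioi fun t _ => (Real.exp_pos _).le)

lemma erfc_le_two (z : ℝ) : erfc z ≤ 2 := by
  have hπ : 0 < Real.sqrt π := Real.sqrt_pos.mpr pi_pos
  have h1 : (∫ t in Set.Ioi z, Real.exp (-t ^ 2)) ≤ Real.sqrt π := by
    rw [← integral_gauss1]
    exact setIntegral_le_integral integrable_gauss1
      (Filter.Eventually.of_forall fun t => (Real.exp_pos _).le)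
  calc erfc z ≤ (2 / Real.sqrt π) * Real.sqrt π := by
        unfold erfc; gcongr
    _ = 2 := by field_simp

lemma erfc_add (c : ℝ) : erfc (-c) + erfc c = 2 := by
  have hπ : Real.sqrt π ≠ 0 := ne_of_gt (Real.sqrt_pos.mpr pi_pos)
  have h1 : (∫ t in Set.Iic c, Real.exp (-t ^ 2)) = ∫ t in Set.Ioi (-c), Real.exp (-t ^ 2) := by
    have := integral_comp_neg_Iic c (fun t : ℝ => Real.exp (-t ^ 2))
    simpa using this
  have h2 := integral_Iic_add_Ioi (b := c) (μ := volume)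
    integrable_gauss1.integrableOn integrable_gauss1.integrableOn
  rw [integral_gauss1] at h2
  unfold erfc
  rw [← h1, ← mul_add, h2, div_mul_cancel₀]
  exact hπ

set_option maxHeartbeats 1000000 in
/-- Explicit lower bound on the mean cosine of the phase error of an AWGN channel
with amplitude `R`, from the proof of Lemma 1 of the paper. -/
theorem ecos_phase_explicit_lower_bound (R : ℝ) (hR : 0 < R)
    (pΦ : ℝ → ℝ)
    (hpΦ : ∀ φ : ℝ, pΦ φ =
      (1 / (2 * π)) * Real.exp (-R ^ 2) +
      (R / Real.sqrt (4 * π)) * Real.cos φ * Real.exp (-R ^ 2 * Real.sin φ ^ 2) *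
        erfc (-(R * Real.cos φ))) :
    (∫ φ in (-π)..π, Real.cos φ * pΦ φ) ≥
      1 - Real.exp (-π ^ 2 * R ^ 2 / 4) - 1 / (2 * R ^ 2) -
        (Real.sqrt π / 4) * R * Real.exp (-R ^ 2) := by
  have hπ : (0:ℝ) < π := pi_pos
  have hsπ : (0:ℝ) < Real.sqrt π := Real.sqrt_pos.mpr hπ
  have hR2 : (0:ℝ) < R ^ 2 := by positivity
  set f : ℝ → ℝ := fun φ =>
    Real.cos φ ^ 2 * Real.exp (-R ^ 2 * Real.sin φ ^ 2) * erfc (-(R * Real.cos φ)) with hfdef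
  set g : ℝ → ℝ := fun φ => Real.cos φ ^ 2 * Real.exp (-R ^ 2 * Real.sin φ ^ 2) with hgdef
  have hgcont : Continuous g := by fun_prop
  have hfmeas : Measurable f := by
    apply Measurable.mul hgcont.measurable
    exact measurable_erfc.comp (by fun_prop)
  have hg01 : ∀ φ, 0 ≤ g φ ∧ g φ ≤ 1 := by
    intro φ
    simp only [hgdef]
    constructor
    · positivity
    · have h1 : Real.exp (-R ^ 2 * Real.sin φ ^ 2) ≤ 1 := by
        rw [Real.exp_le_one_iff]
        nlinarith [sq_nonneg (Real.sin φ), sq_nonneg R]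
      nlinarith [Real.cos_sq_le_one φ, Real.exp_pos (-R ^ 2 * Real.sin φ ^ 2),
        sq_nonneg (Real.cos φ)]
  have hfint : ∀ a b : ℝ, IntervalIntegrable f volume a b := by
    intro a b
    apply (_root_.intervalIntegrable_const (c := (2:ℝ))).mono_fun'
      (hfmeas.aestronglyMeasurable)
    apply Filter.Eventually.of_forall
    intro x
    have h1 := hg01 x
    have h2 := erfc_nonneg (-(R * Real.cos x))
    have h3 := erfc_le_two (-(R * Real.cos x))
    show ‖f x‖ ≤ (2:ℝ)
    have hfx : f x = g x * erfc (-(R * Real.cos x)) := rfl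
    rw [hfx, Real.norm_eq_abs, abs_of_nonneg (mul_nonneg h1.1 h2)]
    nlinarith
  -- Step A: rewrite the integrand
  have hsqrt4π : Real.sqrt (4 * π) = 2 * Real.sqrt π := by
    rw [show (4:ℝ) * π = 2 ^ 2 * π by ring, Real.sqrt_mul (by norm_num),
      Real.sqrt_sq (by norm_num)]
  have hLHS : (∫ φ in (-π)..π, Real.cos φ * pΦ φ)
      = (R / (2 * Real.sqrt π)) * ∫ φ in (-π)..π, f φ := by
    have hcongr : ∫ φ in (-π)..π, Real.cos φ * pΦ φ
        = ∫ φ in (-π)..π,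
          ((Real.exp (-R ^ 2) / (2 * π)) * Real.cos φ + (R / (2 * Real.sqrt π)) * f φ) := by
      apply intervalIntegral.integral_congr
      intro x _
      show Real.cos x * pΦ x = _
      rw [hpΦ x, hsqrt4π, hfdef]
      ring
    rw [hcongr, intervalIntegral.integral_add (f := fun φ => Real.exp (-R ^ 2) / (2 * π) * Real.cos φ)
      ((continuous_const.mul Real.continuous_cos).intervalIntegrable _ _)
      ((hfint _ _).const_mul _),
      intervalIntegral.integral_const_mul, intervalIntegral.integral_const_mul,
      integral_cos]
    simp
  -- Step B: evenness
  have hfeven : ∀ φ, f (-φ) = f φ := by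
    intro φ
    simp [hfdef, Real.cos_neg, Real.sin_neg]
  have hB : ∫ φ in (-π)..π, f φ = 2 * ∫ φ in (0:ℝ)..π, f φ := by
    have hcn := intervalIntegral.integral_comp_neg (a := (0:ℝ)) (b := π) f
    rw [neg_zero] at hcn
    have h1 : ∫ φ in (-π)..(0:ℝ), f φ = ∫ φ in (0:ℝ)..π, f φ := by
      rw [← hcn]
      exact intervalIntegral.integral_congr fun x _ => hfeven x
    rw [← intervalIntegral.integral_add_adjacent_intervals (hfint (-π) 0) (hfint 0 π), h1,
      two_mul]
  -- Step C: symmetrization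
  have hsym : ∀ φ, f φ + f (π - φ) = 2 * g φ := by
    intro φ
    have h3 := erfc_add (R * Real.cos φ)
    simp only [hfdef, hgdef, Real.cos_pi_sub, Real.sin_pi_sub, neg_sq, mul_neg, neg_neg]
    linear_combination (Real.cos φ ^ 2 * Real.exp (-R ^ 2 * Real.sin φ ^ 2)) * h3
  have hintf2 : IntervalIntegrable (fun φ => f (π - φ)) volume 0 π := by
    have := ((hfint 0 π).comp_sub_left π).symm
    simpa using this
  have hC : ∫ φ in (0:ℝ)..π, f φ = ∫ φ in (0:ℝ)..π, g φ := by
    have hflip : ∫ φ in (0:ℝ)..π, f (π - φ) = ∫ φ in (0:ℝ)..π, f φ := by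
      have := intervalIntegral.integral_comp_sub_left (a := (0:ℝ)) (b := π) f π
      simpa using this
    have hadd : ∫ φ in (0:ℝ)..π, (f φ + f (π - φ)) = ∫ φ in (0:ℝ)..π, 2 * g φ :=
      intervalIntegral.integral_congr fun x _ => hsym x
    rw [intervalIntegral.integral_add (hfint 0 π) hintf2, hflip,
      intervalIntegral.integral_const_mul] at hadd
    linarith
  -- Step D: reduce to half interval
  have hD : ∫ φ in (0:ℝ)..π, g φ = 2 * ∫ φ in (0:ℝ)..(π/2), g φ := by
    have hsymg : ∀ φ, g (π - φ) = g φ := by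
      intro φ
      simp [hgdef, Real.cos_pi_sub, Real.sin_pi_sub, neg_sq]
    have h2 : ∫ φ in (π/2)..π, g φ = ∫ φ in (0:ℝ)..(π/2), g φ := by
      have hh := intervalIntegral.integral_comp_sub_left (a := (0:ℝ)) (b := π/2) g π
      rw [show π - π/2 = π/2 by ring, sub_zero] at hh
      rw [← hh]
      exact intervalIntegral.integral_congr fun x _ => hsymg x
    rw [← intervalIntegral.integral_add_adjacent_intervals
      (hgcont.intervalIntegrable 0 (π/2)) (hgcont.intervalIntegrable (π/2) π), h2, two_mul]
  -- Step E: pointwise lower bound on [0, π/2]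
  have hlowcont : Continuous (fun φ : ℝ => (1 - φ ^ 2) * Real.exp (-R ^ 2 * φ ^ 2)) := by
    fun_prop
  have hE : (∫ φ in (0:ℝ)..(π/2), (1 - φ ^ 2) * Real.exp (-R ^ 2 * φ ^ 2))
      ≤ ∫ φ in (0:ℝ)..(π/2), g φ := by
    apply intervalIntegral.integral_mono_on (by positivity)
      (hlowcont.intervalIntegrable _ _) (hgcont.intervalIntegrable _ _)
    intro x hx
    have hx0 : 0 ≤ x := hx.1
    have hsin : Real.sin x ^ 2 ≤ x ^ 2 := by
      have h1 : Real.sin x ≤ x := Real.sin_le hx0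
      have h2 : 0 ≤ Real.sin x := Real.sin_nonneg_of_nonneg_of_le_pi hx0 (by linarith [hx.2])
      nlinarith
    by_cases hx1 : x ≤ 1
    · have h1 : 1 - x ^ 2 ≤ Real.cos x ^ 2 := by
        nlinarith [Real.sin_sq_add_cos_sq x]
      have h2 : Real.exp (-R ^ 2 * x ^ 2) ≤ Real.exp (-R ^ 2 * Real.sin x ^ 2) :=
        Real.exp_le_exp.mpr (by nlinarith [sq_nonneg R])
      have h3 : (0:ℝ) ≤ 1 - x ^ 2 := by nlinarith
      calc (1 - x ^ 2) * Real.exp (-R ^ 2 * x ^ 2)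
          ≤ (1 - x ^ 2) * Real.exp (-R ^ 2 * Real.sin x ^ 2) := by
            exact mul_le_mul_of_nonneg_left h2 h3
        _ ≤ Real.cos x ^ 2 * Real.exp (-R ^ 2 * Real.sin x ^ 2) :=
            mul_le_mul_of_nonneg_right h1 (Real.exp_pos _).le
    · have h1 : 1 - x ^ 2 ≤ 0 := by nlinarith [not_le.mp hx1]
      have h2 : (1 - x ^ 2) * Real.exp (-R ^ 2 * x ^ 2) ≤ 0 :=
        mul_nonpos_of_nonpos_of_nonneg h1 (Real.exp_pos _).le
      exact h2.trans (hg01 x).1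
  -- notation
  set J := ∫ φ in (0:ℝ)..(π/2), Real.exp (-R ^ 2 * φ ^ 2) with hJdef
  set E := Real.exp (-π ^ 2 * R ^ 2 / 4) with hEdef
  have hEpos : 0 < E := Real.exp_pos _
  have hexp_eq : Real.exp (-R ^ 2 * (π/2) ^ 2) = E := by
    rw [hEdef]; ring_nf
  -- Step F: ∫ (1-φ²)e^{-R²φ²} = J - K, K = J/(2R²) - (π/(4R²)) E
  have hKsplit : (∫ φ in (0:ℝ)..(π/2), (1 - φ ^ 2) * Real.exp (-R ^ 2 * φ ^ 2))
      = J - ∫ φ in (0:ℝ)..(π/2), φ ^ 2 * Real.exp (-R ^ 2 * φ ^ 2) := by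
    rw [hJdef, ← intervalIntegral.integral_sub
      ((by fun_prop : Continuous fun φ : ℝ => Real.exp (-R ^ 2 * φ ^ 2)).intervalIntegrable _ _)
      ((by fun_prop : Continuous fun φ : ℝ => φ ^ 2 * Real.exp (-R ^ 2 * φ ^ 2)).intervalIntegrable _ _)]
    apply intervalIntegral.integral_congr
    intro x _
    ring
  have hKval : (∫ φ in (0:ℝ)..(π/2), φ ^ 2 * Real.exp (-R ^ 2 * φ ^ 2))
      = J / (2 * R ^ 2) - π / (4 * R ^ 2) * E := by
    have hderiv : ∀ x ∈ Set.uIcc (0:ℝ) (π/2),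
        HasDerivAt (fun y => -y * Real.exp (-R ^ 2 * y ^ 2) / (2 * R ^ 2))
          (x ^ 2 * Real.exp (-R ^ 2 * x ^ 2) - Real.exp (-R ^ 2 * x ^ 2) / (2 * R ^ 2)) x := by
      intro x _
      have h1 : HasDerivAt (fun y : ℝ => -R ^ 2 * y ^ 2) (-R ^ 2 * (2 * x ^ 1)) x := by
        simpa using (hasDerivAt_pow 2 x).const_mul (-R ^ 2)
      have h2 := h1.exp
      have h3 := ((hasDerivAt_id x).neg.mul h2).div_const (2 * R ^ 2)
      refine h3.congr_deriv ?_
      field_simp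
      simp only [Pi.neg_apply, id]
      ring
    have hFTC := intervalIntegral.integral_eq_sub_of_hasDerivAt hderiv
      ((by fun_prop : Continuous fun x : ℝ =>
        x ^ 2 * Real.exp (-R ^ 2 * x ^ 2) - Real.exp (-R ^ 2 * x ^ 2) / (2 * R ^ 2)).intervalIntegrable _ _)
    rw [intervalIntegral.integral_sub
      ((by fun_prop : Continuous fun φ : ℝ => φ ^ 2 * Real.exp (-R ^ 2 * φ ^ 2)).intervalIntegrable _ _)
      ((by fun_prop : Continuous fun φ : ℝ => Real.exp (-R ^ 2 * φ ^ 2) / (2 * R ^ 2)).intervalIntegrable _ _),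
      intervalIntegral.integral_div] at hFTC
    rw [hexp_eq] at hFTC
    rw [← hJdef] at hFTC
    linear_combination hFTC
  -- Step G: bounds on J
  set T := ∫ x in Set.Ioi (π/2), Real.exp (-R ^ 2 * x ^ 2) with hTdef
  have hIoi0 : ∫ x in Set.Ioi (0:ℝ), Real.exp (-R ^ 2 * x ^ 2) = Real.sqrt π / (2 * R) := by
    rw [integral_gaussian_Ioi, Real.sqrt_div pi_pos.le, Real.sqrt_sq hR.le]
    rw [div_div]
    ring
  have hJT : J = Real.sqrt π / (2 * R) - T := by
    have hint1 : IntegrableOn (fun x : ℝ => Real.exp (-R ^ 2 * x ^ 2)) (Set.Ioc 0 (π/2)) :=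
      (integrable_exp_neg_mul_sq hR2).integrableOn
    have hint2 : IntegrableOn (fun x : ℝ => Real.exp (-R ^ 2 * x ^ 2)) (Set.Ioi (π/2)) :=
      (integrable_exp_neg_mul_sq hR2).integrableOn
    have hsplit : ∫ x in Set.Ioi (0:ℝ), Real.exp (-R ^ 2 * x ^ 2)
        = (∫ x in Set.Ioc (0:ℝ) (π/2), Real.exp (-R ^ 2 * x ^ 2)) + T := by
      rw [hTdef, ← MeasureTheory.setIntegral_union (Set.Ioc_disjoint_Ioi le_rfl)
        measurableSet_Ioi hint1 hint2, Set.Ioc_union_Ioi_eq_Ioi (by positivity)]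
    have hJI : J = ∫ x in Set.Ioc (0:ℝ) (π/2), Real.exp (-R ^ 2 * x ^ 2) := by
      rw [hJdef, intervalIntegral.integral_of_le (by positivity)]
    rw [hJI]
    rw [hIoi0] at hsplit
    linarith
  have hTnonneg : 0 ≤ T :=
    setIntegral_nonneg measurableSet_Ioi fun x _ => (Real.exp_pos _).le
  have hTle : T ≤ E / (π * R ^ 2) := by
    have hxint : IntegrableOn (fun x : ℝ => x * Real.exp (-R ^ 2 * x ^ 2)) (Set.Ioi (π/2)) :=
      (integrable_mul_exp_neg_mul_sq hR2).integrableOn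
    have h2 : ∫ x in Set.Ioi (π/2), x * Real.exp (-R ^ 2 * x ^ 2) = E / (2 * R ^ 2) := by
      have hderiv : ∀ x ∈ Set.Ici (π/2),
          HasDerivAt (fun y => -Real.exp (-R ^ 2 * y ^ 2) / (2 * R ^ 2))
            (x * Real.exp (-R ^ 2 * x ^ 2)) x := by
        intro x _
        have h1 : HasDerivAt (fun y : ℝ => -R ^ 2 * y ^ 2) (-R ^ 2 * (2 * x ^ 1)) x := by
          simpa using (hasDerivAt_pow 2 x).const_mul (-R ^ 2)
        have h2 := (h1.exp.neg).div_const (2 * R ^ 2)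
        refine h2.congr_deriv ?_
        field_simp
      have htend : Filter.Tendsto (fun x : ℝ => -Real.exp (-R ^ 2 * x ^ 2) / (2 * R ^ 2))
          Filter.atTop (nhds 0) := by
        have t1 : Filter.Tendsto (fun x : ℝ => R ^ 2 * x ^ 2) Filter.atTop Filter.atTop :=
          (Filter.tendsto_pow_atTop two_ne_zero).const_mul_atTop hR2
        have t2 : Filter.Tendsto (fun x : ℝ => -R ^ 2 * x ^ 2) Filter.atTop Filter.atBot := by
          simp only [neg_mul]
          exact Filter.tendsto_neg_atBot_iff.mpr t1
        have t3 : Filter.Tendsto (fun x : ℝ => Real.exp (-R ^ 2 * x ^ 2))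
            Filter.atTop (nhds 0) := Real.tendsto_exp_atBot.comp t2
        have t4 := (t3.neg).div_const (2 * R ^ 2)
        simpa using t4
      have := MeasureTheory.integral_Ioi_of_hasDerivAt_of_tendsto' hderiv hxint htend
      rw [this, hexp_eq]
      ring
    have h1 : T ≤ ∫ x in Set.Ioi (π/2), (2 * x / π) * Real.exp (-R ^ 2 * x ^ 2) := by
      apply setIntegral_mono_on (integrable_exp_neg_mul_sq hR2).integrableOn
        (by
          have : (fun x : ℝ => (2 * x / π) * Real.exp (-R ^ 2 * x ^ 2))
              = fun x : ℝ => (2 / π) * (x * Real.exp (-R ^ 2 * x ^ 2)) := by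
            funext x; ring
          rw [this]
          exact hxint.const_mul _)
        measurableSet_Ioi
      intro x hx
      have hx' : π/2 < x := hx
      have hge1 : 1 ≤ 2 * x / π := by
        rw [le_div_iff₀ hπ]
        linarith
      nlinarith [Real.exp_pos (-R ^ 2 * x ^ 2)]
    have h3 : ∫ x in Set.Ioi (π/2), (2 * x / π) * Real.exp (-R ^ 2 * x ^ 2)
        = (2 / π) * (E / (2 * R ^ 2)) := by
      rw [← h2, ← MeasureTheory.integral_const_mul]
      apply setIntegral_congr_fun measurableSet_Ioi
      intro x _
      ring
    rw [h3] at h1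
    calc T ≤ (2 / π) * (E / (2 * R ^ 2)) := h1
      _ = E / (π * R ^ 2) := by field_simp
  -- Final assembly
  have hJle : 2 * R * J ≤ Real.sqrt π := by
    rw [hJT]
    have : 2 * R * (Real.sqrt π / (2 * R) - T) = Real.sqrt π - 2 * R * T := by
      field_simp
    rw [this]
    nlinarith
  have hJge : π * R ^ 2 * Real.sqrt π - 2 * π * R ^ 3 * J ≤ 2 * R * E := by
    have h1 : Real.sqrt π / (2 * R) - J = T := by rw [hJT]; ring
    have h2 : Real.sqrt π / (2 * R) - J ≤ E / (π * R ^ 2) := by rw [h1]; exact hTle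
    have h3 : (Real.sqrt π / (2 * R) - J) * (2 * π * R ^ 3) ≤ (E / (π * R ^ 2)) * (2 * π * R ^ 3) := by
      apply mul_le_mul_of_nonneg_right h2 (by positivity)
    calc π * R ^ 2 * Real.sqrt π - 2 * π * R ^ 3 * J
        = (Real.sqrt π / (2 * R) - J) * (2 * π * R ^ 3) := by field_simp
      _ ≤ (E / (π * R ^ 2)) * (2 * π * R ^ 3) := h3
      _ = 2 * R * E := by field_simp
  set Q := ∫ φ in (0:ℝ)..(π/2), g φ with hQdef
  have hQge : 4 * R ^ 2 * Q ≥ 4 * R ^ 2 * J - 2 * J + π * E := by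
    have h1 : Q ≥ J - (J / (2 * R ^ 2) - π / (4 * R ^ 2) * E) := by
      rw [ge_iff_le, ← hKval]
      calc J - ∫ φ in (0:ℝ)..(π/2), φ ^ 2 * Real.exp (-R ^ 2 * φ ^ 2)
          = ∫ φ in (0:ℝ)..(π/2), (1 - φ ^ 2) * Real.exp (-R ^ 2 * φ ^ 2) := hKsplit.symm
        _ ≤ Q := hE
    have h2 : 4 * R ^ 2 * (J - (J / (2 * R ^ 2) - π / (4 * R ^ 2) * E))
        = 4 * R ^ 2 * J - 2 * J + π * E := by
      field_simp
      ring
    nlinarith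
  -- rewrite LHS
  rw [hLHS, hB, hC, hD]
  -- goal: (R/(2√π)) * (2*(2*Q)) ≥ 1 - E - 1/(2R²) - (√π/4) R exp(-R²)
  have hgoal : (R / (2 * Real.sqrt π)) * (2 * (2 * Q)) ≥ 1 - E - 1 / (2 * R ^ 2) := by
    rw [ge_iff_le, ← sub_nonneg]
    have hss : Real.sqrt π * Real.sqrt π = π := Real.mul_self_sqrt hπ.le
    have hπ4 : 4 ≤ π ^ 2 := by nlinarith [Real.pi_gt_three]
    have key : (R / (2 * Real.sqrt π)) * (2 * (2 * Q)) - (1 - E - 1 / (2 * R ^ 2))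
        = (4 * π * R ^ 3 * Q - (2 * π * R ^ 2 * Real.sqrt π - 2 * π * R ^ 2 * Real.sqrt π * E - π * Real.sqrt π))
          / (2 * π * R ^ 2 * Real.sqrt π) := by
      field_simp
      ring
    rw [key]
    apply div_nonneg _ (by positivity)
    -- need: 4πR³Q ≥ 2πR²√π - 2πR²√π E - π√π
    -- from hQge (×πR): 4πR³Q ≥ πR(4R²J - 2J + πE) = 4πR³J - 2πRJ + π²RE
    -- from hJle: 2RJ ≤ √π ⇒ -2πRJ ≥ -π√π
    -- total: 4πR³Q ≥ 2πR²√π - 4RE - π√π + π²RE ≥ 2πR²√π - π√π - 2πR²√πE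
    --   ⇐ π²RE - 4RE ≥ -2πR²√πE ⇐ (π²-4) ≥ 0 plus positives
    nlinarith [mul_le_mul_of_nonneg_left hQge (le_of_lt (mul_pos hπ hR)),
      mul_nonneg (mul_nonneg hEpos.le hR.le) (sub_nonneg.mpr hπ4),
      mul_pos (mul_pos (mul_pos two_pos hπ) (mul_pos hR2 hsπ)) hEpos]
  have hlast : (0:ℝ) ≤ (Real.sqrt π / 4) * R * Real.exp (-R ^ 2) := by positivity
  linarith
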